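/- Let K be a finite group of order l, n ≥ 2, and G = F_n ≀ K the wreath product, with Δ : G → ℤ defined by Δ((f_{k₁},…,f_{k_l})k) = Σ_{i=1}^l ql(f_{k_i}). Then for all g, h ∈ G the commutator [g,h] = g⁻¹h⁻¹gh satisfies |Δ([g,h])| ≤ 15l. -/

import Mathlib

/-- `tr m` is `-1, 0, 1` according as `m ≡ -1, 0, 1 (mod 3)`. -/
def tr (m : ℤ) : ℤ := if m % 3 = 0 then 0 else if m % 3 = 1 then 1 else -1

/-- `ql w` is the sum of `tr` of the exponents of the syllables in the
reduced syllable form of `w`: the reduced word `w.toWord` is split into maximal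
runs (syllables) of letters with the same generator, and each syllable
`x_i ^ α` contributes `tr α`. -/
def ql {n : ℕ} (w : FreeGroup (Fin n)) : ℤ :=
  ((w.toWord.splitBy (fun p q => p.1 == q.1)).map
    (fun s => tr ((s.map (fun p => if p.2 then (1 : ℤ) else -1)).sum))).sum

/-- The permutation action of `K` on the base group `K → H` of the wreath product
`H ≀ K`, by left translation on the index set: `(k • f) k' = f (k⁻¹ * k')`. -/
def wreathAction (H K : Type*) [Group H] [Group K] : K →* MulAut (K → H) where
  toFun k :=
    { toFun := fun f x => f (k⁻¹ * x)
      invFun := fun f x => f (k * x)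
      left_inv := fun f => by funext x; simp [← mul_assoc]
      right_inv := fun f => by funext x; simp [← mul_assoc]
      map_mul' := fun f g => rfl }
  map_one' := by
    ext f x
    simp
  map_mul' := fun a b => by
    ext f x
    simp [mul_assoc]

/-- The wreath product `H ≀ K = (∏_{k ∈ K} H) ⋊ K`. -/
abbrev WreathProduct (H K : Type*) [Group H] [Group K] :=
  SemidirectProduct (K → H) K (wreathAction H K)

/-- The quasi-homomorphism `Δ : Fₙ ≀ K → ℤ`, `Δ((f_{k₁}, …, f_{k_l})k) = Σᵢ ql(f_{kᵢ})`. -/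
def Δ {n : ℕ} {K : Type*} [Group K] [Fintype K]
    (g : WreathProduct (FreeGroup (Fin n)) K) : ℤ :=
  ∑ k : K, ql (g.left k)

/-!
`ql` is an odd quasimorphism of defect `3` on the free group. Write reduced words as
`u = p c` and `v = c⁻¹ q`, so that `u v` has reduced word `p q`. The value of `ql` on a
concatenation `a b` is `ql a + ql b` unless the last syllable of `a` and the first syllable of
`b` have the same generator and fuse, in which case only those two `tr` terms change. Comparing
the junctions `p|c`, `c⁻¹|q` and `p|q` (any two of them fuse only if the third does) leaves an
error of at most three `tr` values.

Summing over coordinates, `Δ` is an odd quasimorphism of `Fₙ ≀ K` of defect `3l`, because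
multiplication in the wreath product only permutes the coordinates of the second factor. An odd
quasimorphism of defect `D` is bounded by `3D` on commutators, so `|Δ([g,h])| ≤ 9l`.
-/

namespace List

variable {β γ : Type*} {r : β → β → Bool}

theorem splitBy_map {r' : γ → γ → Bool} (f : β → γ) (hf : ∀ x y, r' (f x) (f y) = r x y)
    (l : List β) : (l.map f).splitBy r' = (l.splitBy r).map (map f) := by
  rw [splitBy_eq_iff]
  refine ⟨by rw [← map_flatten, flatten_splitBy], ?_, ?_, ?_⟩
  · simp [nil_notMem_splitBy]
  · simp only [mem_map, forall_exists_index, and_imp, forall_apply_eq_imp_iff₂, isChain_map, hf]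
    exact fun u hu => isChain_of_mem_splitBy hu
  · rw [isChain_map]
    refine (isChain_getLast_head_splitBy r l).imp fun u v ⟨hu, hv, h⟩ => ?_
    exact ⟨by simpa using hu, by simpa using hv, by rwa [getLast_map, head_map, hf]⟩

theorem splitBy_reverse (l : List β) :
    l.reverse.splitBy (flip r) = ((l.splitBy r).map reverse).reverse := by
  rw [splitBy_eq_iff]
  refine ⟨by rw [← reverse_flatten, flatten_splitBy], ?_, ?_, ?_⟩
  · simp [nil_notMem_splitBy]
  · simp only [mem_reverse, mem_map, forall_exists_index, and_imp, forall_apply_eq_imp_iff₂,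
      isChain_reverse]
    exact fun u hu => isChain_of_mem_splitBy hu
  · rw [isChain_reverse, isChain_map]
    refine (isChain_getLast_head_splitBy r l).imp fun u v ⟨hu, hv, h⟩ => ?_
    exact ⟨by simpa using hv, by simpa using hu, by rwa [getLast_reverse, head_reverse]⟩

theorem splitBy_append_of_rel {l m : List β} {L M : List (List β)} {s t : List β}
    (hl : l.splitBy r = L ++ [s]) (hm : m.splitBy r = t :: M)
    (h : ∀ x ∈ l.getLast?, ∀ y ∈ m.head?, r x y = true) :
    (l ++ m).splitBy r = L ++ (s ++ t) :: M := by
  have hs : s ≠ [] := ne_nil_of_mem_splitBy (hl ▸ mem_append_right L (mem_singleton_self s))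
  have ht : t ≠ [] := ne_nil_of_mem_splitBy (hm ▸ mem_cons_self)
  have hst : s ++ t ≠ [] := append_ne_nil_of_left_ne_nil hs t
  have hnil := nil_notMem_splitBy r l
  have hchain := fun u (hu : u ∈ l.splitBy r) => isChain_of_mem_splitBy hu
  have hbd := isChain_getLast_head_splitBy r l
  have hnil' := nil_notMem_splitBy r m
  have hchain' := fun u (hu : u ∈ m.splitBy r) => isChain_of_mem_splitBy hu
  have hbd' := isChain_getLast_head_splitBy r m
  have hflat := flatten_splitBy r l
  have hflat' := flatten_splitBy r m
  rw [hl] at hflat hnil hchain hbd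
  rw [hm] at hflat' hnil' hchain' hbd'
  subst hflat hflat'
  rw [splitBy_eq_iff]
  refine ⟨by simp, by simp_all, fun u hu => ?_, ?_⟩
  · rcases mem_append.1 hu with hu | hu
    · exact hchain u (mem_append_left _ hu)
    rcases mem_cons.1 hu with rfl | hu
    · refine (hchain s (by simp)).append (hchain' t (by simp)) fun x hx y hy => h x ?_ y ?_
      · simp [getLast?_append_of_ne_nil _ hs, hx]
      · simp [head?_append_of_ne_nil _ ht, hy]
    · exact hchain' u (mem_cons_of_mem _ hu)
  · rw [isChain_append] at hbd ⊢
    rw [isChain_cons] at hbd' ⊢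
    refine ⟨hbd.1, ⟨fun y hy => ?_, hbd'.2⟩, fun x hx y hy => ?_⟩
    · obtain ⟨_, hy', hty⟩ := hbd'.1 y hy
      exact ⟨hst, hy', by rwa [getLast_append_of_ne_nil hst ht]⟩
    · obtain rfl : y = s ++ t := by simpa using hy.symm
      obtain ⟨hx', _, hxs⟩ := hbd.2.2 x hx s rfl
      exact ⟨hx', hst, by rwa [head_append_left hs]⟩

end List

theorem abs_tr_le_one (m : ℤ) : |tr m| ≤ 1 := by
  unfold tr
  split_ifs <;> simp

theorem tr_neg (m : ℤ) : tr (-m) = -tr m := by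
  unfold tr
  split_ifs <;> omega

theorem abs_tr_three_junctions_le (P Q R : Prop) [Decidable P] [Decidable Q] [Decidable R]
    (hPQ : P → Q → R) (hQR : Q → R → P) (hRP : R → P → Q) (x y z : ℤ) :
    |(if P then tr (x + y) - tr x - tr y else 0) - (if Q then tr (x + z) - tr x - tr z else 0)
      - (if R then tr (-z + y) - tr (-z) - tr y else 0)| ≤ 3 := by
  have := abs_tr_le_one (x + y)
  have := abs_tr_le_one (x + z)
  have := abs_tr_le_one (-z + y)
  have := abs_tr_le_one x
  have := abs_tr_le_one y
  have := abs_tr_le_one z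
  have := tr_neg z
  rw [abs_le] at *
  split_ifs <;> first | tauto | (constructor <;> linarith)

namespace FreeGroup

variable {α : Type*}

def expSum (s : List (α × Bool)) : ℤ := (s.map fun p => if p.2 then 1 else -1).sum

theorem expSum_append (s t : List (α × Bool)) : expSum (s ++ t) = expSum s + expSum t := by
  simp [expSum]

theorem expSum_invRev (s : List (α × Bool)) : expSum (invRev s) = -expSum s := by
  rw [expSum, expSum, invRev, List.map_reverse, List.sum_reverse, List.sum_neg, List.map_map,
    List.map_map]
  congr 1
  refine List.map_congr_left ?_
  rintro ⟨_, _ | _⟩ _ <;> rfl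

def headGen (w : List (α × Bool)) : Option α := w.head?.map Prod.fst

def lastGen (w : List (α × Bool)) : Option α := w.getLast?.map Prod.fst

theorem lastGen_invRev (w : List (α × Bool)) : lastGen (invRev w) = headGen w := by
  simp [lastGen, headGen, invRev, List.getLast?_reverse, Option.map_map, Function.comp_def]

def Merges (a b : List (α × Bool)) : Prop := (lastGen a).isSome ∧ lastGen a = headGen b

theorem merges_iff {a b : List (α × Bool)} :
    Merges a b ↔ ∃ x ∈ a.getLast?, ∃ y ∈ b.head?, x.1 = y.1 := by
  unfold Merges lastGen headGen
  cases a.getLast? <;> cases b.head? <;> simp [eq_comm]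

variable [DecidableEq α]

instance (a b : List (α × Bool)) : Decidable (Merges a b) := by
  unfold Merges
  infer_instance

def sameGen (p q : α × Bool) : Bool := p.1 == q.1

theorem flip_sameGen : flip (sameGen (α := α)) = sameGen := by
  funext p q
  exact Bool.beq_comm

def qlWord (w : List (α × Bool)) : ℤ := ((w.splitBy sameGen).map fun s => tr (expSum s)).sum

def headSyllableExp (w : List (α × Bool)) : ℤ := ((w.splitBy sameGen).head?.map expSum).getD 0

def lastSyllableExp (w : List (α × Bool)) : ℤ := ((w.splitBy sameGen).getLast?.map expSum).getD 0

def junction (a b : List (α × Bool)) : ℤ :=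
  if Merges a b then
    tr (lastSyllableExp a + headSyllableExp b) - tr (lastSyllableExp a) - tr (headSyllableExp b)
  else 0

theorem splitBy_invRev (w : List (α × Bool)) :
    (invRev w).splitBy sameGen = ((w.splitBy sameGen).map invRev).reverse := by
  rw [invRev, ← flip_sameGen, List.splitBy_reverse, flip_sameGen,
    List.splitBy_map (r := sameGen) (fun p : α × Bool => (p.1, !p.2)) fun _ _ => rfl,
    List.map_map]
  rfl

theorem qlWord_invRev (w : List (α × Bool)) : qlWord (invRev w) = -qlWord w := by
  rw [qlWord, qlWord, splitBy_invRev, List.map_reverse, List.sum_reverse, List.map_map,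
    List.sum_neg, List.map_map]
  congr 1
  refine List.map_congr_left fun s _ => ?_
  simp [expSum_invRev, tr_neg]

theorem lastSyllableExp_invRev (w : List (α × Bool)) :
    lastSyllableExp (invRev w) = -headSyllableExp w := by
  rw [lastSyllableExp, headSyllableExp, splitBy_invRev, List.getLast?_reverse, List.head?_map]
  cases (w.splitBy sameGen).head? <;> simp [expSum_invRev]

theorem qlWord_append (a b : List (α × Bool)) :
    qlWord (a ++ b) = qlWord a + qlWord b + junction a b := by
  by_cases hab : Merges a b
  · obtain ⟨x, hx, y, hy, hxy⟩ := merges_iff.1 hab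
    obtain ⟨L, s, hL⟩ : ∃ L s, a.splitBy sameGen = L ++ [s] := by
      rcases (a.splitBy sameGen).eq_nil_or_concat' with h | h
      · simp_all [List.splitBy_eq_nil]
      · exact h
    obtain ⟨t, M, hM⟩ : ∃ t M, b.splitBy sameGen = t :: M := by
      cases h : b.splitBy sameGen with
      | nil => simp_all [List.splitBy_eq_nil]
      | cons t M => exact ⟨t, M, rfl⟩
    have hsplit := List.splitBy_append_of_rel hL hM fun x' hx' y' hy' => by
      obtain rfl := Option.mem_unique hx hx'
      obtain rfl := Option.mem_unique hy hy'
      simpa [sameGen] using hxy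
    rw [junction, if_pos hab, qlWord, qlWord, qlWord, hsplit, hL, hM, lastSyllableExp,
      headSyllableExp, hL, hM]
    simp only [List.map_append, List.map_cons, List.map_nil, List.sum_append, List.sum_cons,
      List.sum_nil, expSum_append, add_zero, List.getLast?_append, List.getLast?_singleton,
      Option.some_or, Option.map_some, Option.getD_some, List.head?_cons]
    ring
  · have hsplit := List.splitBy_append (r := sameGen) (l := a) (m := b) fun x hx y hy => by
      simpa [sameGen] using fun hxy => hab (merges_iff.2 ⟨x, hx, y, hy, hxy⟩)
    rw [junction, if_neg hab, add_zero, qlWord, hsplit, List.map_append, List.sum_append]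
    rfl

theorem IsReduced.exists_reduce_append {a b : List (α × Bool)} (ha : IsReduced a)
    (hb : IsReduced b) :
    ∃ p c q, a = p ++ c ∧ b = invRev c ++ q ∧ reduce (a ++ b) = p ++ q := by
  induction b generalizing a with
  | nil => exact ⟨a, [], [], by simp, by simp, by simp [ha.reduce_eq]⟩
  | cons m b ih =>
    rcases a.eq_nil_or_concat' with rfl | ⟨a, ℓ, rfl⟩
    · exact ⟨[], [], m :: b, by simp, by simp, by simp [hb.reduce_eq]⟩
    by_cases hcancel : ℓ.1 = m.1 ∧ ℓ.2 ≠ m.2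
    · have hm : m = (ℓ.1, !ℓ.2) := by
        obtain ⟨h1, h2⟩ := hcancel
        exact Prod.ext h1.symm (by grind)
      obtain ⟨p, c, q, rfl, rfl, hpq⟩ :=
        ih (ha.infix (List.prefix_append _ _).isInfix) (hb.infix (List.suffix_cons _ _).isInfix)
      refine ⟨p, c ++ [ℓ], q, by simp, by simp [hm, invRev], ?_⟩
      rw [← hpq]
      apply reduce.Step.eq
      simpa [hm] using Red.Step.not (L₁ := p ++ c) (L₂ := invRev c ++ q) (x := ℓ.1) (b := ℓ.2)
    · refine ⟨a ++ [ℓ], [], m :: b, by simp, by simp, IsReduced.reduce_eq ?_⟩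
      refine List.IsChain.append ha hb fun x hx y hy => ?_
      simp only [List.getLast?_append, List.getLast?_singleton, Option.some_or,
        Option.mem_def, Option.some.injEq, List.head?_cons] at hx hy
      subst hx hy
      grind

theorem abs_qlWord_reduce_append_sub_le {a b : List (α × Bool)} (ha : IsReduced a)
    (hb : IsReduced b) : |qlWord (reduce (a ++ b)) - qlWord a - qlWord b| ≤ 3 := by
  obtain ⟨p, c, q, rfl, rfl, hpq⟩ := ha.exists_reduce_append hb
  have hgen := lastGen_invRev c
  convert abs_tr_three_junctions_le (Merges p q) (Merges p c) (Merges (invRev c) q)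
    (by unfold Merges; grind) (by unfold Merges; grind) (by unfold Merges; grind)
    (lastSyllableExp p) (headSyllableExp q) (headSyllableExp c) using 2
  rw [hpq, qlWord_append, qlWord_append, qlWord_append, qlWord_invRev]
  simp only [junction, lastSyllableExp_invRev]
  ring

end FreeGroup

theorem ql_eq_qlWord {n : ℕ} (w : FreeGroup (Fin n)) : ql w = FreeGroup.qlWord w.toWord := rfl

theorem abs_ql_mul_sub_le {n : ℕ} (u v : FreeGroup (Fin n)) : |ql (u * v) - ql u - ql v| ≤ 3 := by
  simpa only [ql_eq_qlWord, FreeGroup.toWord_mul] using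
    FreeGroup.abs_qlWord_reduce_append_sub_le FreeGroup.isReduced_toWord
      FreeGroup.isReduced_toWord

theorem ql_inv {n : ℕ} (u : FreeGroup (Fin n)) : ql u⁻¹ = -ql u := by
  rw [ql_eq_qlWord, ql_eq_qlWord, FreeGroup.toWord_inv, FreeGroup.qlWord_invRev]

theorem abs_commutator_le_of_quasimorphism {G : Type*} [Group G] (f : G → ℤ) (D : ℤ)
    (hmul : ∀ a b, |f (a * b) - f a - f b| ≤ D) (hinv : ∀ a, f a⁻¹ = -f a) (g h : G) :
    |f (g⁻¹ * h⁻¹ * g * h)| ≤ 3 * D := by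
  have h₁ := hmul (g⁻¹ * h⁻¹ * g) h
  have h₂ := hmul (g⁻¹ * h⁻¹) g
  have h₃ := hmul g⁻¹ h⁻¹
  rw [hinv, hinv] at h₃
  rw [abs_le] at *
  constructor <;> linarith

@[simp]
theorem wreathAction_apply {H K : Type*} [Group H] [Group K] (k : K) (f : K → H) (x : K) :
    wreathAction H K k f x = f (k⁻¹ * x) :=
  rfl

namespace WreathProduct

variable {H K : Type*} [Group H] [Group K] [Fintype K]

def sumCoords (φ : H → ℤ) (g : WreathProduct H K) : ℤ := ∑ k, φ (g.left k)

theorem abs_sumCoords_mul_sub_le (φ : H → ℤ) (D : ℤ) (hφ : ∀ a b, |φ (a * b) - φ a - φ b| ≤ D)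
    (g h : WreathProduct H K) :
    |sumCoords φ (g * h) - sumCoords φ g - sumCoords φ h| ≤ Fintype.card K * D := by
  have hshift : ∑ k, φ (h.left (g.right⁻¹ * k)) = sumCoords φ h :=
    Equiv.sum_comp (Equiv.mulLeft g.right⁻¹) (fun k => φ (h.left k))
  calc |sumCoords φ (g * h) - sumCoords φ g - sumCoords φ h|
      = |∑ k, (φ (g.left k * h.left (g.right⁻¹ * k)) - φ (g.left k)
          - φ (h.left (g.right⁻¹ * k)))| := by
        rw [← hshift]
        simp [sumCoords, Finset.sum_sub_distrib]
    _ ≤ ∑ _k : K, D := (Finset.abs_sum_le_sum_abs _ _).trans (Finset.sum_le_sum fun k _ => hφ _ _)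
    _ = Fintype.card K * D := by simp

theorem sumCoords_inv (φ : H → ℤ) (hφ : ∀ a, φ a⁻¹ = -φ a) (g : WreathProduct H K) :
    sumCoords φ g⁻¹ = -sumCoords φ g := by
  simp only [sumCoords, SemidirectProduct.inv_left, wreathAction_apply, inv_inv, Pi.inv_apply, hφ,
    Finset.sum_neg_distrib]
  exact congrArg Neg.neg (Equiv.sum_comp (Equiv.mulLeft g.right) fun k => φ (g.left k))

end WreathProduct

theorem delta_commutator_general (n : ℕ) (K : Type*) [Group K] [Fintype K]
    (g h : WreathProduct (FreeGroup (Fin n)) K) :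
    |Δ (g⁻¹ * h⁻¹ * g * h)| ≤ 15 * (Fintype.card K : ℤ) := by
  have hΔ := abs_commutator_le_of_quasimorphism (WreathProduct.sumCoords ql) _
    (WreathProduct.abs_sumCoords_mul_sub_le ql 3 abs_ql_mul_sub_le)
    (WreathProduct.sumCoords_inv ql ql_inv) g h
  have hK : (0 : ℤ) ≤ Fintype.card K := Int.natCast_nonneg _
  exact hΔ.trans (by linarith)

/-- For all `g, h ∈ Fₙ ≀ K`: `|Δ([g,h])| ≤ 15l`, where `[g,h] = g⁻¹h⁻¹gh` and `l = |K|`. -/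
theorem delta_commutator (n : ℕ) (hn : 2 ≤ n) (K : Type*) [Group K] [Fintype K]
    (g h : WreathProduct (FreeGroup (Fin n)) K) :
    |Δ (g⁻¹ * h⁻¹ * g * h)| ≤ 15 * (Fintype.card K : ℤ) :=
  delta_commutator_general n K g h
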